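/- arXiv:2411.05975 — 4 statements merged into one kernel-verified Lean document; each statement's English description precedes it below -/
import Mathlib

section
/- Let {v_t} be i.i.d. real random variables with E[v_t] = 0, E[v_t²] = 1 and |v_t| ≤ v̄ for a constant v̄, let a > 1 and p_n = ⌊(log n)^a⌋, and set ψ_t(n) = (v_t, v_{t−1}, …, v_{t−p_n})ᵀ. Then for each η with 1/2 < η < 1, almost surely there exist a constant c > 0 and an integer N ≥ 1 such that for every n ≥ N, λ_min{∑_{t=n−⌊n^η⌋}^{n} ψ_t(n) ψ_t(n)ᵀ} ≥ c n^η. -/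
/-!
Let `W` be the window of `K = ⌊n^η⌋ + 1` times, `q = p_n + 1` and `G = ∑_{t ∈ W} ψ_t ψ_tᵀ`.
Entry `(i, j)` of `G - K • 1` is a sum over `W` of the centred lag products
`v_{t-i} v_{t-j} - δ_ij`. Splitting `W` by residues mod `q`, the summands within one class are
functions of disjoint pairs of `v`'s, so Hoeffding's inequality bounds the probability that some
entry exceeds `K / (2q)` by `2 q³ exp (-K / (8 (v̄² + 1)² q⁴))`. As `q` is polylogarithmic and
`K > n^η`, these probabilities are summable, so by Borel–Cantelli almost surely every entry is
eventually below `K / (2q)`; then `xᵀ G x ≥ K - q · K / (2q) = K / 2 > n^η / 2` for every unit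
vector `x`.
-/

open MeasureTheory ProbabilityTheory Filter Finset Real Asymptotics
open scoped NNReal

lemma Finset.exists_div_card_le_abs_of_le_abs_sum {ι : Type*} {s : Finset ι} (hs : s.Nonempty)
    {f : ι → ℝ} {ε : ℝ} (h : ε ≤ |∑ i ∈ s, f i|) : ∃ i ∈ s, ε / #s ≤ |f i| := by
  refine exists_le_of_sum_le hs ?_
  rw [sum_const, nsmul_eq_mul, mul_div_cancel₀ _ (by exact_mod_cast hs.card_ne_zero)]
  exact h.trans (abs_sum_le_sum_abs f s)

section QuadraticForm

variable {ι : Type*} [Fintype ι]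

lemma sum_sq_sum_mul_eq {κ : Type*} (W : Finset κ) (x : ι → ℝ) (y : κ → ι → ℝ) :
    ∑ t ∈ W, (∑ i, x i * y t i) ^ 2 = ∑ i, ∑ j, x i * x j * ∑ t ∈ W, y t i * y t j := by
  simp_rw [sq, sum_mul_sum, mul_sum]
  rw [sum_comm]
  refine sum_congr rfl fun i _ => ?_
  rw [sum_comm]
  exact sum_congr rfl fun j _ => sum_congr rfl fun t _ => by ring

lemma mul_sum_sq_le_sum_mul_mul_of_abs_sub_le [DecidableEq ι] {G : ι → ι → ℝ} {K ε : ℝ}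
    (hε : 0 ≤ ε) (hG : ∀ i j, |G i j - if i = j then K else 0| ≤ ε) (x : ι → ℝ) :
    (K - Fintype.card ι * ε) * ∑ i, x i ^ 2 ≤ ∑ i, ∑ j, x i * x j * G i j := by
  have hdiag : ∑ i, ∑ j, x i * x j * (if i = j then K else 0) = K * ∑ i, x i ^ 2 := by
    simp [mul_sum, sq, mul_comm]
  have hoff : |∑ i, ∑ j, x i * x j * (G i j - if i = j then K else 0)|
      ≤ ε * (Fintype.card ι * ∑ i, x i ^ 2) := calc
    _ ≤ ∑ i, ∑ j, |x i| * |x j| * ε := by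
        refine (abs_sum_le_sum_abs _ _).trans (sum_le_sum fun i _ => ?_)
        refine (abs_sum_le_sum_abs _ _).trans (sum_le_sum fun j _ => ?_)
        rw [abs_mul, abs_mul]
        exact mul_le_mul_of_nonneg_left (hG i j) (by positivity)
    _ = ε * (∑ i, |x i|) ^ 2 := by
        rw [sq, sum_mul_sum, mul_sum]
        simp_rw [mul_sum]
        exact sum_congr rfl fun i _ => sum_congr rfl fun j _ => by ring
    _ ≤ ε * (Fintype.card ι * ∑ i, x i ^ 2) := by
        gcongr
        simpa using sq_sum_le_card_mul_sum_sq (s := univ) (f := fun i => |x i|)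
  have hsplit : ∑ i, ∑ j, x i * x j * G i j = K * ∑ i, x i ^ 2
      + ∑ i, ∑ j, x i * x j * (G i j - if i = j then K else 0) := by
    rw [← hdiag, ← sum_add_distrib]
    exact sum_congr rfl fun i _ => by rw [← sum_add_distrib]; simp [mul_sub]
  rw [hsplit]
  linarith [neg_abs_le (∑ i, ∑ j, x i * x j * (G i j - if i = j then K else 0))]

end QuadraticForm

lemma measurable_iSup_comap_of_mem {Ω ι β : Type*} [mβ : MeasurableSpace β] (v : ι → Ω → β)
    {S : Set ι} {i : ι} (hi : i ∈ S) : Measurable[⨆ j ∈ S, mβ.comap (v j)] (v i) :=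
  (comap_measurable (v i)).mono (le_iSup₂ (f := fun j _ => mβ.comap (v j)) i hi) le_rfl

section Probability

variable {Ω : Type*} [MeasurableSpace Ω] {μ : Measure Ω}

namespace ProbabilityTheory.HasSubgaussianMGF

lemma mono {X : Ω → ℝ} {c c' : ℝ≥0} (h : HasSubgaussianMGF X c μ) (hc : c ≤ c') :
    HasSubgaussianMGF X c' μ :=
  ⟨h.integrable_exp_mul, fun t => (h.mgf_le t).trans (exp_le_exp.2 (by gcongr))⟩

lemma of_abs_le [IsProbabilityMeasure μ] {X : Ω → ℝ} {C : ℝ≥0} (hX : Measurable X)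
    (hXC : ∀ ω, |X ω| ≤ C) (hmean : μ[X] = 0) : HasSubgaussianMGF X (C ^ 2) μ := by
  convert hasSubgaussianMGF_of_mem_Icc_of_integral_eq_zero hX.aemeasurable
    (ae_of_all μ fun ω => abs_le.1 (hXC ω)) hmean
  ext
  simp [abs_of_nonneg]

lemma measure_abs_ge_le [IsFiniteMeasure μ] {X : Ω → ℝ} {c : ℝ≥0}
    (h : HasSubgaussianMGF X c μ) {ε : ℝ} (hε : 0 ≤ ε) :
    μ.real {ω | ε ≤ |X ω|} ≤ 2 * exp (-ε ^ 2 / (2 * c)) := by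
  have hsplit : {ω | ε ≤ |X ω|} = {ω | ε ≤ X ω} ∪ {ω | ε ≤ (-X) ω} := by
    ext ω
    simp [le_abs, le_neg]
  calc μ.real {ω | ε ≤ |X ω|}
      ≤ μ.real {ω | ε ≤ X ω} + μ.real {ω | ε ≤ (-X) ω} := hsplit ▸ measureReal_union_le _ _
    _ ≤ exp (-ε ^ 2 / (2 * c)) + exp (-ε ^ 2 / (2 * c)) :=
      add_le_add (h.measure_ge_le hε) (h.neg.measure_ge_le hε)
    _ = 2 * exp (-ε ^ 2 / (2 * c)) := by ring

end ProbabilityTheory.HasSubgaussianMGF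

section Blocks

variable {ι β : Type*} [MeasurableSpace β] {v : ι → Ω → β}

lemma ProbabilityTheory.iIndepFun.indepFun_of_measurable_iSup (hv : iIndepFun v μ)
    (hv_meas : ∀ i, Measurable (v i)) {S T : Set ι} (hST : Disjoint S T) {X Y : Ω → ℝ}
    (hX : Measurable[⨆ i ∈ S, MeasurableSpace.comap (v i) ‹_›] X)
    (hY : Measurable[⨆ i ∈ T, MeasurableSpace.comap (v i) ‹_›] Y) :
    IndepFun X Y μ := by
  rw [IndepFun_iff_Indep]
  rw [iIndepFun_iff_iIndep] at hv
  exact indep_of_indep_of_le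
    (indep_iSup_of_disjoint (fun i => (hv_meas i).comap_le) hv hST) hX.comap_le hY.comap_le

lemma ProbabilityTheory.iIndepFun.hasSubgaussianMGF_sum_of_pairwiseDisjoint {κ : Type*}
    (hv : iIndepFun v μ) (hv_meas : ∀ i, Measurable (v i)) {B : κ → Set ι} {X : κ → Ω → ℝ}
    {c : κ → ℝ≥0} {s : Finset κ} (hB : (s : Set κ).PairwiseDisjoint B)
    (hX : ∀ k ∈ s, Measurable[⨆ i ∈ B k, MeasurableSpace.comap (v i) ‹_›] (X k))
    (hXc : ∀ k ∈ s, HasSubgaussianMGF (X k) (c k) μ) :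
    HasSubgaussianMGF (fun ω => ∑ k ∈ s, X k ω) (∑ k ∈ s, c k) μ := by
  classical
  induction s using Finset.induction_on with
  | empty =>
    have := hv.isProbabilityMeasure
    simp
  | insert a s ha ih =>
    simp only [Finset.sum_insert ha]
    refine (hXc a (mem_insert_self a s)).add_of_indepFun
      (ih (hB.subset (by simp)) (fun k hk => hX k (mem_insert_of_mem hk))
        (fun k hk => hXc k (mem_insert_of_mem hk))) ?_
    refine hv.indepFun_of_measurable_iSup hv_meas (T := ⋃ k ∈ s, B k) ?_
      (hX a (mem_insert_self a s)) ?_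
    · refine Set.disjoint_iUnion₂_right.2 fun k hk => hB (by simp) (by simp [hk]) ?_
      rintro rfl
      exact ha hk
    · refine Finset.measurable_sum s fun k hk => (hX k (mem_insert_of_mem hk)).mono ?_ le_rfl
      exact biSup_mono fun i hi => Set.mem_biUnion hk hi

end Blocks

lemma MeasureTheory.ae_eventually_notMem_of_summable_measureReal [IsFiniteMeasure μ]
    {s : ℕ → Set Ω} (hs : Summable fun n => μ.real (s n)) :
    ∀ᵐ ω ∂μ, ∀ᶠ n in atTop, ω ∉ s n := by
  refine ae_eventually_notMem ?_
  have hofReal : ∀ n, μ (s n) = ENNReal.ofReal (μ.real (s n)) := fun n =>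
    (ofReal_measureReal).symm
  simp_rw [hofReal]
  rw [← ENNReal.ofReal_tsum_of_nonneg (fun n => measureReal_nonneg) hs]
  exact ENNReal.ofReal_ne_top

end Probability

section Asymptotics

lemma isLittleO_floor_log_rpow_add_one (a : ℝ) {s : ℝ} (hs : 0 < s) :
    (fun n : ℕ => ((⌊log n ^ a⌋₊ + 1 : ℕ) : ℝ)) =o[atTop] fun n => (n : ℝ) ^ s := by
  have hlog : (fun n : ℕ => log n ^ a) =o[atTop] fun n => (n : ℝ) ^ s :=
    (isLittleO_log_rpow_rpow_atTop a hs).comp_tendsto tendsto_natCast_atTop_atTop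
  have hone : (fun _ : ℕ => (1 : ℝ)) =o[atTop] fun n => (n : ℝ) ^ s :=
    (isLittleO_one_left_iff ℝ).2 <| tendsto_norm_atTop_atTop.comp <|
      (tendsto_rpow_atTop hs).comp tendsto_natCast_atTop_atTop
  refine (isBigO_of_le _ fun n => ?_).trans_isLittleO (hlog.add hone)
  have hL : 0 ≤ log n ^ a := rpow_nonneg (log_natCast_nonneg n) a
  rw [norm_of_nonneg (by positivity), norm_of_nonneg (by positivity)]
  push_cast
  gcongr
  exact Nat.floor_le hL

lemma summable_mul_exp_neg_div {q K : ℕ → ℝ} {D η : ℝ} (hD : 0 < D) (hη : 0 < η)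
    (hq_pos : ∀ n, 0 < q n) (hq : ∀ s : ℝ, 0 < s → q =o[atTop] fun n => (n : ℝ) ^ s)
    (hK : ∀ n : ℕ, (n : ℝ) ^ η ≤ K n) :
    Summable fun n => 2 * q n ^ 3 * exp (-K n / (D * q n ^ 4)) := by
  have hpow : ∀ k : ℕ, 0 < k → ∀ s : ℝ, 0 < s →
      (fun n => q n ^ k) =o[atTop] fun n => (n : ℝ) ^ s :=
    fun k hk s hs => ((hq (s / k) (by positivity)).pow hk).congr_right fun n => by
      rw [← rpow_mul_natCast n.cast_nonneg, div_mul_cancel₀ _ (by positivity)]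
  have hlog : (fun n : ℕ => log n) =o[atTop] fun n => (n : ℝ) ^ (η / 2) :=
    (isLittleO_log_rpow_atTop (half_pos hη)).comp_tendsto tendsto_natCast_atTop_atTop
  have hcube : ∀ᶠ n : ℕ in atTop, 2 * q n ^ 3 ≤ n := by
    filter_upwards [(hpow 3 (by norm_num) 1 one_pos).def (half_pos one_pos)] with n hn
    rw [norm_of_nonneg (pow_nonneg (hq_pos n).le 3), norm_of_nonneg (by positivity),
      rpow_one] at hn
    linarith
  have hexp : ∀ᶠ n : ℕ in atTop, 3 * log n * (D * q n ^ 4) ≤ n ^ η := by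
    have h := ((hpow 4 (by norm_num) (η / 2) (half_pos hη)).mul hlog).def
      (c := 1 / (3 * D)) (by positivity)
    filter_upwards [h, eventually_ge_atTop 1] with n hn hn1
    have hn0 : (0 : ℝ) < n := by exact_mod_cast hn1
    have hlog0 := log_natCast_nonneg n
    rw [norm_of_nonneg (by positivity), norm_of_nonneg (by positivity), ← rpow_add hn0,
      add_halves] at hn
    calc 3 * log n * (D * q n ^ 4) = 3 * D * (q n ^ 4 * log n) := by ring
      _ ≤ 3 * D * (1 / (3 * D) * n ^ η) := by gcongr
      _ = n ^ η := by field_simp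
  refine .of_norm_bounded_eventually_nat (Real.summable_nat_pow_inv.2 one_lt_two) ?_
  filter_upwards [hcube, hexp, eventually_ge_atTop 1] with n hcube hexp hn
  have hn0 : (0 : ℝ) < n := by exact_mod_cast hn
  rw [norm_of_nonneg (by have := hq_pos n; positivity)]
  calc 2 * q n ^ 3 * exp (-K n / (D * q n ^ 4))
      ≤ n * exp (-(3 * log n)) := by
        gcongr
        rw [neg_div, neg_le_neg_iff, le_div_iff₀ (by have := hq_pos n; positivity)]
        exact hexp.trans (hK n)
    _ = ((n : ℝ) ^ 2)⁻¹ := by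
        rw [exp_neg, show 3 * log n = log ((n : ℝ) ^ 3) by simp [log_pow], exp_log (by positivity)]
        field_simp

end Asymptotics

section LagProduct

variable {Ω : Type*} {v : ℤ → Ω → ℝ}

noncomputable def lagProduct (v : ℤ → Ω → ℝ) (i j t : ℕ) (ω : Ω) : ℝ :=
  v (t - i) ω * v (t - j) ω - if i = j then 1 else 0

lemma abs_mul_le_sq_of_abs_le {b : ℝ≥0} (hvb : ∀ k ω, |v k ω| ≤ b) (k l : ℤ) (ω : Ω) :
    |v k ω * v l ω| ≤ b ^ 2 := by
  rw [abs_mul, sq]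
  exact mul_le_mul (hvb _ _) (hvb _ _) (abs_nonneg _) b.2

lemma abs_lagProduct_le {b : ℝ≥0} (hvb : ∀ k ω, |v k ω| ≤ b) (i j t : ℕ) (ω : Ω) :
    |lagProduct v i j t ω| ≤ (b ^ 2 + 1 : ℝ≥0) := by
  have hδ : |(if i = j then 1 else 0 : ℝ)| ≤ 1 := by split_ifs <;> simp
  push_cast
  exact (abs_sub _ _).trans (add_le_add (abs_mul_le_sq_of_abs_le hvb _ _ ω) hδ)

lemma measurable_lagProduct [MeasurableSpace Ω] (i j t : ℕ) :
    Measurable[⨆ k ∈ ({(t : ℤ) - i, (t : ℤ) - j} : Set ℤ),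
      MeasurableSpace.comap (v k) inferInstance] (lagProduct v i j t) :=
  ((measurable_iSup_comap_of_mem v (by simp)).mul
    (measurable_iSup_comap_of_mem v (by simp))).sub_const _

lemma sum_lagProduct (W : Finset ℕ) (i j : ℕ) (ω : Ω) :
    ∑ t ∈ W, lagProduct v i j t ω
      = ∑ t ∈ W, v (t - i) ω * v (t - j) ω - if i = j then (#W : ℝ) else 0 := by
  simp only [lagProduct, sum_sub_distrib]
  split_ifs <;> simp

def lagDeviationEvent (v : ℤ → Ω → ℝ) (W : Finset ℕ) (q : ℕ) : Set Ω :=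
  ⋃ i : Fin q, ⋃ j : Fin q, {ω | (#W : ℝ) / (2 * q) ≤ |∑ t ∈ W, lagProduct v i j t ω|}

lemma half_card_le_sum_sq_of_notMem_lagDeviationEvent {W : Finset ℕ} {q : ℕ} {ω : Ω}
    (hω : ω ∉ lagDeviationEvent v W q) (x : Fin q → ℝ) (hx : ∑ i, x i ^ 2 = 1) :
    (#W : ℝ) / 2 ≤ ∑ t ∈ W, (∑ i : Fin q, x i * v ((t : ℤ) - (i : ℕ)) ω) ^ 2 := by
  simp only [lagDeviationEvent, Set.mem_iUnion, Set.mem_ofPred_eq, not_exists, not_le] at hω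
  have hG : ∀ i j : Fin q,
      |∑ t ∈ W, v (t - (i : ℕ)) ω * v (t - (j : ℕ)) ω - if i = j then (#W : ℝ) else 0|
        ≤ #W / (2 * q) := fun i j => by
    simpa [sum_lagProduct, Fin.val_inj] using (hω i j).le
  rw [sum_sq_sum_mul_eq]
  have := mul_sum_sq_le_sum_mul_mul_of_abs_sub_le (by positivity) hG x
  rw [hx, mul_one, Fintype.card_fin] at this
  have hq : (q : ℝ) * (#W / (2 * q)) ≤ #W / 2 := by
    rcases eq_or_ne (q : ℝ) 0 with h | h
    · simp [h]; positivity
    · exact (by field_simp : (q : ℝ) * (#W / (2 * q)) = #W / 2).le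
  linarith

variable [MeasurableSpace Ω] {μ : Measure Ω} [IsProbabilityMeasure μ]
  (hv_meas : ∀ k, Measurable (v k)) (hv_indep : iIndepFun v μ) {b : ℝ≥0}
  (hvb : ∀ k ω, |v k ω| ≤ b) (hv_mean : ∀ k, μ[v k] = 0) (hv_var : ∀ k, ∫ ω, v k ω ^ 2 ∂μ = 1)
include hv_meas hv_indep hvb hv_mean hv_var

lemma integral_lagProduct (i j t : ℕ) : μ[lagProduct v i j t] = 0 := by
  have hint : Integrable (fun ω => v (t - i) ω * v (t - j) ω) μ :=
    .of_bound ((hv_meas _).mul (hv_meas _)).aestronglyMeasurable (b ^ 2 : ℝ)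
      (ae_of_all _ (abs_mul_le_sq_of_abs_le hvb _ _))
  unfold lagProduct
  rw [integral_sub hint (integrable_const _), integral_const, probReal_univ, one_smul]
  split_ifs with hij
  · simp [hij, ← sq, hv_var]
  · have hne : (t : ℤ) - i ≠ t - j := by omega
    rw [(hv_indep.indepFun hne).integral_fun_mul_eq_mul_integral (hv_meas _).aestronglyMeasurable
      (hv_meas _).aestronglyMeasurable, hv_mean, zero_mul, sub_zero]

lemma hasSubgaussianMGF_sum_lagProduct_filter_mod {q i j : ℕ} (hi : i < q) (hj : j < q)
    (W : Finset ℕ) (r : ℕ) :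
    HasSubgaussianMGF (fun ω => ∑ t ∈ W with t % q = r, lagProduct v i j t ω)
      (#W * (b ^ 2 + 1) ^ 2) μ := by
  have hblocks : ((W.filter (· % q = r) : Finset ℕ) : Set ℕ).PairwiseDisjoint
      fun t => ({(t : ℤ) - i, (t : ℤ) - j} : Set ℤ) := by
    intro t ht t' ht' hne
    rw [mem_coe, mem_filter] at ht ht'
    have hdvd : (q : ℤ) ∣ (t : ℤ) - t' := Nat.ModEq.dvd (ht'.2.trans ht.2.symm)
    refine Set.disjoint_left.2 fun k hk hk' => hne ?_
    simp only [Set.mem_insert_iff, Set.mem_singleton_iff] at hk hk'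
    have : (t : ℤ) - t' = 0 := Int.eq_zero_of_abs_lt_dvd hdvd (by rw [abs_lt]; omega)
    omega
  refine (hv_indep.hasSubgaussianMGF_sum_of_pairwiseDisjoint hv_meas hblocks
    (fun t _ => measurable_lagProduct i j t)
    (c := fun _ => (b ^ 2 + 1) ^ 2) fun t _ => ?_).mono ?_
  · exact .of_abs_le ((hv_meas _).mul (hv_meas _) |>.sub_const _) (abs_lagProduct_le hvb i j t)
      (integral_lagProduct hv_meas hv_indep hvb hv_mean hv_var i j t)
  · rw [sum_const, nsmul_eq_mul]
    gcongr
    exact filter_subset _ _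

lemma measureReal_le_abs_sum_lagProduct_le {q i j : ℕ} (hi : i < q) (hj : j < q)
    (W : Finset ℕ) {ε : ℝ} (hε : 0 ≤ ε) :
    μ.real {ω | ε ≤ |∑ t ∈ W, lagProduct v i j t ω|}
      ≤ q * (2 * exp (-(ε / q) ^ 2 / (2 * (#W * (b ^ 2 + 1) ^ 2)))) := by
  have hq : 0 < q := by omega
  have hsub : {ω | ε ≤ |∑ t ∈ W, lagProduct v i j t ω|}
      ⊆ ⋃ r ∈ range q, {ω | ε / q ≤ |∑ t ∈ W with t % q = r, lagProduct v i j t ω|} := by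
    intro ω hω
    rw [Set.mem_ofPred_eq,
      ← sum_fiberwise_of_maps_to fun t _ => mem_range.2 (t.mod_lt (y := q) hq)] at hω
    obtain ⟨r, hr, hrω⟩ := exists_div_card_le_abs_of_le_abs_sum (nonempty_range_iff.2 hq.ne') hω
    rw [card_range] at hrω
    exact Set.mem_biUnion hr hrω
  calc μ.real {ω | ε ≤ |∑ t ∈ W, lagProduct v i j t ω|}
      ≤ ∑ r ∈ range q, μ.real {ω | ε / q ≤ |∑ t ∈ W with t % q = r, lagProduct v i j t ω|} :=
        (measureReal_mono hsub (measure_ne_top μ _)).trans (measureReal_biUnion_finset_le _ _)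
    _ ≤ ∑ r ∈ range q, 2 * exp (-(ε / q) ^ 2 / (2 * (#W * (b ^ 2 + 1) ^ 2))) := by
        refine sum_le_sum fun r _ => ?_
        have h := (hasSubgaussianMGF_sum_lagProduct_filter_mod hv_meas hv_indep hvb hv_mean hv_var
          hi hj W r).measure_abs_ge_le (div_nonneg hε q.cast_nonneg)
        push_cast at h
        exact h
    _ = q * (2 * exp (-(ε / q) ^ 2 / (2 * (#W * (b ^ 2 + 1) ^ 2)))) := by
        rw [sum_const, card_range, nsmul_eq_mul]

lemma measureReal_lagDeviationEvent_le {W : Finset ℕ} (hW : W.Nonempty) (q : ℕ) :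
    μ.real (lagDeviationEvent v W q)
      ≤ 2 * q ^ 3 * exp (-#W / (8 * (b ^ 2 + 1) ^ 2 * q ^ 4)) := by
  have hentry : ∀ i j : Fin q,
      μ.real {ω | (#W : ℝ) / (2 * q) ≤ |∑ t ∈ W, lagProduct v i j t ω|}
        ≤ 2 * q * exp (-#W / (8 * (b ^ 2 + 1) ^ 2 * q ^ 4)) := by
    intro i j
    have hq : (q : ℝ) ≠ 0 := by have := i.pos; positivity
    have hWpos : (#W : ℝ) ≠ 0 := by exact_mod_cast hW.card_ne_zero
    refine (measureReal_le_abs_sum_lagProduct_le hv_meas hv_indep hvb hv_mean hv_var i.2 j.2 W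
      (ε := #W / (2 * q)) (by positivity)).trans_eq ?_
    field_simp
    ring_nf
  calc μ.real (lagDeviationEvent v W q)
      ≤ ∑ i : Fin q, ∑ j : Fin q,
          μ.real {ω | (#W : ℝ) / (2 * q) ≤ |∑ t ∈ W, lagProduct v i j t ω|} :=
        (measureReal_iUnion_fintype_le _).trans
          (sum_le_sum fun i _ => measureReal_iUnion_fintype_le _)
    _ ≤ ∑ _i : Fin q, ∑ _j : Fin q, 2 * q * exp (-#W / (8 * (b ^ 2 + 1) ^ 2 * q ^ 4)) :=
        sum_le_sum fun i _ => sum_le_sum fun j _ => hentry i j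
    _ = 2 * q ^ 3 * exp (-#W / (8 * (b ^ 2 + 1) ^ 2 * q ^ 4)) := by
        simp only [sum_const, card_univ, Fintype.card_fin, nsmul_eq_mul]
        ring

end LagProduct

lemma lt_card_Icc_sub_floor_rpow {η : ℝ} (hη0 : 0 < η) (hη1 : η ≤ 1) (n : ℕ) :
    (n : ℝ) ^ η < #(Icc (n - ⌊(n : ℝ) ^ η⌋₊) n) := by
  have hle : (n : ℝ) ^ η ≤ n := by
    rcases Nat.eq_zero_or_pos n with rfl | hn
    · simp [zero_rpow hη0.ne']
    · simpa using rpow_le_rpow_of_exponent_le (by exact_mod_cast hn : (1 : ℝ) ≤ n) hη1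
  have hfloor : ⌊(n : ℝ) ^ η⌋₊ ≤ n := Nat.floor_le_of_le hle
  have hcard : #(Icc (n - ⌊(n : ℝ) ^ η⌋₊) n) = ⌊(n : ℝ) ^ η⌋₊ + 1 := by
    rw [Nat.card_Icc]
    omega
  rw [hcard]
  push_cast
  exact Nat.lt_floor_add_one _

theorem stmt4_general {Ω : Type*} [MeasurableSpace Ω] (μ : Measure Ω) [IsProbabilityMeasure μ]
    (v : ℤ → Ω → ℝ) (hv_meas : ∀ t, Measurable (v t))
    (hv_indep : iIndepFun v μ)
    (hv_mean : ∀ t, ∫ ω, v t ω ∂μ = 0)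
    (hv_var : ∀ t, ∫ ω, (v t ω) ^ 2 ∂μ = 1)
    (vbar : ℝ) (hv_bdd : ∀ t ω, |v t ω| ≤ vbar)
    (a : ℝ) (pn : ℕ → ℕ) (hpn : ∀ n, pn n = ⌊Real.log n ^ a⌋₊)
    (η : ℝ) (hη1 : 1 / 2 < η) (hη2 : η < 1) :
    ∀ᵐ ω ∂μ, ∃ c : ℝ, 0 < c ∧ ∃ N : ℕ, 1 ≤ N ∧ ∀ n ≥ N,
      ∀ x : Fin (pn n + 1) → ℝ, (∑ i, x i ^ 2) = 1 →
        c * (n : ℝ) ^ η ≤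
          ∑ t ∈ Finset.Icc (n - ⌊(n : ℝ) ^ η⌋₊) n,
            (∑ i : Fin (pn n + 1), x i * v ((t : ℤ) - (i : ℕ)) ω) ^ 2 := by
  set W : ℕ → Finset ℕ := fun n => Icc (n - ⌊(n : ℝ) ^ η⌋₊) n
  have hW : ∀ n : ℕ, (n : ℝ) ^ η < #(W n) := lt_card_Icc_sub_floor_rpow (by linarith) hη2.le
  have hvb : ∀ t ω, |v t ω| ≤ ‖vbar‖₊ := fun t ω => (hv_bdd t ω).trans (by simp [le_abs_self])
  have hsum : Summable fun n => μ.real (lagDeviationEvent v (W n) (pn n + 1)) := by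
    refine .of_nonneg_of_le (fun n => measureReal_nonneg) (fun n =>
      measureReal_lagDeviationEvent_le hv_meas hv_indep hvb hv_mean hv_var
        (nonempty_Icc.2 (Nat.sub_le _ _)) _) ?_
    exact summable_mul_exp_neg_div (by positivity) (by linarith) (fun n => by positivity)
      (fun s hs => by simpa [hpn] using isLittleO_floor_log_rpow_add_one a hs) (fun n => (hW n).le)
  filter_upwards [ae_eventually_notMem_of_summable_measureReal hsum] with ω hω
  obtain ⟨N, hN⟩ := eventually_atTop.1 hω
  refine ⟨1 / 2, one_half_pos, N + 1, Nat.le_add_left 1 N, fun n hn x hx => ?_⟩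
  calc 1 / 2 * (n : ℝ) ^ η ≤ #(W n) / 2 := by linarith [hW n]
    _ ≤ _ := half_card_le_sum_sq_of_notMem_lagDeviationEvent (hN n (by omega)) x hx

/-- Lemma 2 of the paper: excitation of the dither signal.
Let `{v_t}_{t∈ℤ}` be i.i.d. with mean `0`, variance `1` and `|v_t| ≤ v̄`, let `a > 1`,
`p_n = ⌊(log n)^a⌋`, and `ψ_t(n) = (v_t, v_{t−1}, …, v_{t−p_n})ᵀ`. Then for each
`1/2 < η < 1`, almost surely there exist `c > 0` and `N ≥ 1` such that for every `n ≥ N`,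
`λ_min{∑_{t=n−⌊n^η⌋}^n ψ_t(n) ψ_t(n)ᵀ} ≥ c n^η` (stated via the quadratic form over unit
vectors). -/
theorem stmt4 {Ω : Type*} [MeasurableSpace Ω] (μ : Measure Ω) [IsProbabilityMeasure μ]
    (v : ℤ → Ω → ℝ) (hv_meas : ∀ t, Measurable (v t))
    (hv_indep : iIndepFun v μ)
    (hv_ident : ∀ t, μ.map (v t) = μ.map (v 0))
    (hv_mean : ∀ t, ∫ ω, v t ω ∂μ = 0)
    (hv_var : ∀ t, ∫ ω, (v t ω) ^ 2 ∂μ = 1)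
    (vbar : ℝ) (hv_bdd : ∀ t ω, |v t ω| ≤ vbar)
    (a : ℝ) (ha : 1 < a) (pn : ℕ → ℕ) (hpn : ∀ n, pn n = ⌊Real.log n ^ a⌋₊)
    (η : ℝ) (hη1 : 1 / 2 < η) (hη2 : η < 1) :
    ∀ᵐ ω ∂μ, ∃ c : ℝ, 0 < c ∧ ∃ N : ℕ, 1 ≤ N ∧ ∀ n ≥ N,
      ∀ x : Fin (pn n + 1) → ℝ, (∑ i, x i ^ 2) = 1 →
        c * (n : ℝ) ^ η ≤
          ∑ t ∈ Finset.Icc (n - ⌊(n : ℝ) ^ η⌋₊) n,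
            (∑ i : Fin (pn n + 1), x i * v ((t : ℤ) - (i : ℕ)) ω) ^ 2 :=
  stmt4_general μ v hv_meas hv_indep hv_mean hv_var vbar hv_bdd a pn hpn η hη1 hη2
end

section
/- Let A be a real p × p matrix and let ρ(A) denote its spectral radius (the maximum modulus of its complex eigenvalues). Then for any ε > 0, ‖A^i‖ ≤ M λ^i for all i ≥ 0, where M = (1 + 2/ε)^{p−1} √p and λ = ρ(A) + ε‖A‖. -/
/-!
Complexify `A` and put it in Schur form `A = U L U*` with `U` unitary and `L` lower triangular.
The diagonal of `L` consists of eigenvalues, so it is bounded by `ρ(A)`, and every entry of `L`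
is bounded by `‖L‖ = ‖A‖`. Conjugating by `D = diag(1, r, …, r^(p-1))` with `r = ε / (1 + ε)`
scales the entry `(j, k)` below the diagonal by `r^(j-k)`, so by the Schur test
(`‖M‖ ≤ c` when every row and column of `|M|` sums to at most `c`) the norm of `C = D L D⁻¹` is at
most `ρ(A) + ‖A‖ ∑_{m ≥ 1} r^m = ρ(A) + ε ‖A‖`. Hence
`‖A^i‖ = ‖L^i‖ ≤ ‖D⁻¹‖ ‖C‖^i ‖D‖ ≤ (1 + 1/ε)^(p-1) (ρ(A) + ε ‖A‖)^i`.
-/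

open scoped Matrix.Norms.L2Operator ENNReal
open Module Finset Matrix WithLp

theorem Finset.sum_pow_le_div_one_sub {ι : Type*} {s : Finset ι} {φ : ι → ℕ}
    (hφ : Set.InjOn φ s) (hφ0 : ∀ i ∈ s, φ i ≠ 0) {r : ℝ} (hr0 : 0 ≤ r) (hr1 : r < 1) :
    ∑ i ∈ s, r ^ φ i ≤ r / (1 - r) := by
  rw [← sum_image hφ]
  calc ∑ m ∈ s.image φ, r ^ m ≤ ∑ m ∈ Ico 1 (s.sup φ + 1), r ^ m := by
        refine sum_le_sum_of_subset_of_nonneg (fun m hm => ?_) fun _ _ _ => by positivity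
        obtain ⟨i, hi, rfl⟩ := mem_image.mp hm
        have := le_sup (f := φ) hi
        have := hφ0 i hi
        simp only [mem_Ico]
        omega
    _ ≤ r ^ 1 / (1 - r) := geom_sum_Ico_le_of_lt_one hr0 hr1
    _ = r / (1 - r) := by rw [pow_one]

theorem Fin.sum_lt_pow_sub_le {p : ℕ} {r : ℝ} (hr0 : 0 ≤ r) (hr1 : r < 1) (j : Fin p) :
    ∑ k : Fin p, (if k < j then r ^ (j - k : ℕ) else 0) ≤ r / (1 - r) := by
  rw [← sum_filter]
  refine sum_pow_le_div_one_sub (fun k hk k' hk' _ => ?_) (fun k hk => ?_) hr0 hr1 <;>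
    simp only [mem_coe, mem_filter, mem_univ, true_and] at * <;> omega

theorem Fin.sum_gt_pow_sub_le {p : ℕ} {r : ℝ} (hr0 : 0 ≤ r) (hr1 : r < 1) (k : Fin p) :
    ∑ j : Fin p, (if k < j then r ^ (j - k : ℕ) else 0) ≤ r / (1 - r) := by
  rw [← sum_filter]
  refine sum_pow_le_div_one_sub (fun j hj j' hj' _ => ?_) (fun j hj => ?_) hr0 hr1 <;>
    simp only [mem_coe, mem_filter, mem_univ, true_and] at * <;> omega

theorem norm_pow_units_conj_le {R : Type*} [SeminormedRing R] [NormOneClass R] (u : Rˣ) (x : R)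
    (i : ℕ) : ‖(↑u⁻¹ * x * ↑u) ^ i‖ ≤ ‖(↑u⁻¹ : R)‖ * ‖x‖ ^ i * ‖(u : R)‖ := by
  rw [Units.conj_pow']
  refine (norm_mul_le _ _).trans ?_
  gcongr
  exact (norm_mul_le _ _).trans (by gcongr; exact norm_pow_le x i)

theorem spectrum.norm_le_toReal_spectralRadius {𝕜 A : Type*} [NormedField 𝕜] [NormedRing A]
    [NormedAlgebra 𝕜 A] [CompleteSpace A] [NormOneClass A] {a : A} {k : 𝕜}
    (hk : k ∈ spectrum 𝕜 a) : ‖k‖ ≤ (spectralRadius 𝕜 a).toReal := by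
  have hfin : spectralRadius 𝕜 a ≠ ∞ :=
    ne_top_of_le_ne_top ENNReal.coe_ne_top (spectrum.spectralRadius_le_nnnorm a)
  simpa using ENNReal.toReal_mono hfin
    (le_iSup₂ (f := fun k (_ : k ∈ spectrum 𝕜 a) => (‖k‖₊ : ℝ≥0∞)) k hk)

theorem Matrix.IsLowerTriangular.diag_mem_spectrum {K n : Type*} [Field K] [Fintype n]
    [LinearOrder n] {L : Matrix n n K} (hL : L.IsLowerTriangular) (j : n) :
    L j j ∈ spectrum K L := by
  have hchar := charpoly_of_isUpperTriangular L.transpose hL.transpose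
  rw [charpoly_transpose] at hchar
  rw [mem_spectrum_iff_isRoot_charpoly, hchar]
  exact (Polynomial.isRoot_prod _ _ _).mpr ⟨j, mem_univ _, by simp⟩

section L2OpNorm

variable {𝕜 m n : Type*} [RCLike 𝕜] [Fintype m] [Fintype n] [DecidableEq n]

theorem Matrix.l2_opNorm_le_of_sum_norm_le {M : Matrix m n 𝕜} {c : ℝ} (hc : 0 ≤ c)
    (hrow : ∀ i, ∑ j, ‖M i j‖ ≤ c) (hcol : ∀ j, ∑ i, ‖M i j‖ ≤ c) : ‖M‖ ≤ c := by
  rw [l2_opNorm_def]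
  refine ContinuousLinearMap.opNorm_le_bound _ hc fun x => ?_
  refine (sq_le_sq₀ (norm_nonneg _) (by positivity)).mp ?_
  -- Cauchy–Schwarz with weights `‖M i j‖`
  have hrow_sq : ∀ i, ‖(M *ᵥ x.ofLp) i‖ ^ 2 ≤ c * ∑ j, ‖M i j‖ * ‖x.ofLp j‖ ^ 2 := fun i =>
    calc ‖(M *ᵥ x.ofLp) i‖ ^ 2 ≤ (∑ j, ‖M i j‖ * ‖x.ofLp j‖) ^ 2 := by
          gcongr
          exact (norm_sum_le _ _).trans_eq (by simp [norm_mul])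
      _ ≤ (∑ j, ‖M i j‖) * ∑ j, ‖M i j‖ * ‖x.ofLp j‖ ^ 2 :=
          sum_sq_le_sum_mul_sum_of_sq_le_mul _ (fun _ _ => norm_nonneg _)
            (fun _ _ => by positivity) fun _ _ => le_of_eq (by ring)
      _ ≤ c * ∑ j, ‖M i j‖ * ‖x.ofLp j‖ ^ 2 := by gcongr; exact hrow i
  calc ‖(toEuclideanLin.trans LinearMap.toContinuousLinearMap) M x‖ ^ 2
      = ∑ i, ‖(M *ᵥ x.ofLp) i‖ ^ 2 := by simp [EuclideanSpace.norm_sq_eq]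
    _ ≤ ∑ i, c * ∑ j, ‖M i j‖ * ‖x.ofLp j‖ ^ 2 := sum_le_sum fun i _ => hrow_sq i
    _ = c * ∑ j, (∑ i, ‖M i j‖) * ‖x.ofLp j‖ ^ 2 := by
          rw [← mul_sum, sum_comm]
          simp [sum_mul]
    _ ≤ c * ∑ j, c * ‖x.ofLp j‖ ^ 2 := by gcongr with j; exact hcol j
    _ = (c * ‖x‖) ^ 2 := by rw [← mul_sum, mul_pow, EuclideanSpace.norm_sq_eq]; ring

theorem Matrix.norm_entry_le_l2_opNorm (M : Matrix m n 𝕜) (i : m) (j : n) : ‖M i j‖ ≤ ‖M‖ := by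
  have h := M.l2_opNorm_mulVec (EuclideanSpace.single j 1)
  simp only [EuclideanSpace.equiv, PiLp.coe_symm_continuousLinearEquiv] at h
  calc ‖M i j‖ = ‖(toLp 2 (M *ᵥ (EuclideanSpace.single j (1 : 𝕜)).ofLp)).ofLp i‖ := by simp
    _ ≤ ‖M‖ := (PiLp.norm_apply_le _ i).trans (by simpa using h)

end L2OpNorm

section Complexification

variable {m n : Type*} [Fintype m] [Fintype n]

theorem EuclideanSpace.norm_sq_toLp_eq_re_add_im (z : n → ℂ) :
    ‖toLp 2 z‖ ^ 2 = ‖toLp 2 fun i => (z i).re‖ ^ 2 + ‖toLp 2 fun i => (z i).im‖ ^ 2 := by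
  simp only [EuclideanSpace.norm_sq_eq, ← sum_add_distrib, Complex.sq_norm, Complex.normSq_apply,
    Real.norm_eq_abs, sq_abs]
  simp [sq]

theorem Matrix.norm_sq_map_ofReal_mulVec (A : Matrix m n ℝ) (z : n → ℂ) :
    ‖toLp 2 (A.map (algebraMap ℝ ℂ) *ᵥ z)‖ ^ 2 =
      ‖toLp 2 (A *ᵥ fun j => (z j).re)‖ ^ 2 + ‖toLp 2 (A *ᵥ fun j => (z j).im)‖ ^ 2 := by
  rw [EuclideanSpace.norm_sq_toLp_eq_re_add_im]
  congr 4 <;> ext i <;> simp [mulVec, dotProduct, Complex.re_sum, Complex.im_sum]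

theorem Matrix.l2_opNorm_map_ofReal [DecidableEq n] (A : Matrix m n ℝ) :
    ‖A.map (algebraMap ℝ ℂ)‖ = ‖A‖ := by
  apply le_antisymm
  · rw [l2_opNorm_def]
    refine ContinuousLinearMap.opNorm_le_bound _ (norm_nonneg _) fun z => ?_
    refine (sq_le_sq₀ (norm_nonneg _) (by positivity)).mp ?_
    have hre := A.l2_opNorm_mulVec (toLp 2 fun j => (z j).re)
    have him := A.l2_opNorm_mulVec (toLp 2 fun j => (z j).im)
    simp only [EuclideanSpace.equiv, PiLp.coe_symm_continuousLinearEquiv] at hre him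
    have hz := EuclideanSpace.norm_sq_toLp_eq_re_add_im z.ofLp
    rw [toLp_ofLp] at hz
    simp only [LinearEquiv.trans_apply, LinearMap.coe_toContinuousLinearMap', toLpLin_apply]
    rw [norm_sq_map_ofReal_mulVec, mul_pow, hz, mul_add, ← mul_pow, ← mul_pow]
    gcongr
  · rw [l2_opNorm_def (A := A)]
    refine ContinuousLinearMap.opNorm_le_bound _ (norm_nonneg _) fun x => ?_
    have h := (A.map (algebraMap ℝ ℂ)).l2_opNorm_mulVec (toLp 2 fun j => (x j : ℂ))
    simp only [EuclideanSpace.equiv, PiLp.coe_symm_continuousLinearEquiv] at h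
    refine (sq_le_sq₀ (norm_nonneg _) (by positivity)).mp ?_
    have h2 := pow_le_pow_left₀ (norm_nonneg _) h 2
    rw [norm_sq_map_ofReal_mulVec, mul_pow, EuclideanSpace.norm_sq_toLp_eq_re_add_im] at h2
    simpa [mul_pow, ← Pi.zero_def, toLpLin_apply] using h2

end Complexification

theorem LinearMap.mapsTo_orthogonal_span_singleton {𝕜 E : Type*} [RCLike 𝕜]
    [NormedAddCommGroup E] [InnerProductSpace 𝕜 E] [FiniteDimensional 𝕜 E] {f : E →ₗ[𝕜] E}
    {v : E} {μ : 𝕜} (hv : adjoint f v = μ • v) : Set.MapsTo f (𝕜 ∙ v)ᗮ (𝕜 ∙ v)ᗮ := by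
  intro w hw
  simp only [SetLike.mem_coe, Submodule.mem_orthogonal_singleton_iff_inner_right] at hw ⊢
  rw [← adjoint_inner_left, hv, inner_smul_left, hw, mul_zero]

theorem LinearMap.exists_orthonormalBasis_toMatrix_isLowerTriangular
    {E : Type*} [NormedAddCommGroup E] [InnerProductSpace ℂ E] [FiniteDimensional ℂ E]
    {n : ℕ} (hn : finrank ℂ E = n) (f : E →ₗ[ℂ] E) :
    ∃ b : OrthonormalBasis (Fin n) ℂ E, (toMatrixOrthonormal b f).IsLowerTriangular := by
  induction n generalizing E with
  | zero => exact ⟨(stdOrthonormalBasis ℂ E).reindex (finCongr hn), fun i => i.elim0⟩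
  | succ n ih =>
    have : Nontrivial E := finrank_pos_iff (R := ℂ) |>.mp (by omega)
    have : Fact (finrank ℂ E = n + 1) := ⟨hn⟩
    -- the first basis vector is a unit eigenvector `u` of `f†`, so that `uᗮ` is `f`-invariant
    obtain ⟨μ, hμ⟩ := End.exists_eigenvalue (adjoint f)
    obtain ⟨v, hv⟩ := hμ.exists_hasEigenvector
    set u : E := (‖v‖⁻¹ : ℂ) • v
    have hu : ‖u‖ = 1 := norm_smul_inv_norm hv.2
    have hK : Set.MapsTo f (ℂ ∙ u)ᗮ (ℂ ∙ u)ᗮ := mapsTo_orthogonal_span_singleton <| by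
      rw [map_smul, hv.apply_eq_smul, smul_comm]
    obtain ⟨w, hw⟩ := ih (Submodule.finrank_orthogonal_span_singleton
      (norm_ne_zero_iff.mp (by simp [hu]))) (f.restrict hK)
    have hon : Orthonormal ℂ (Matrix.vecCons u fun i => (w i : E)) := by
      refine orthonormal_vecCons_iff.mpr
        ⟨hu, fun i => ?_, w.orthonormal.comp_linearIsometry (ℂ ∙ u)ᗮ.subtypeₗᵢ⟩
      exact Submodule.inner_right_of_mem_orthogonal (Submodule.mem_span_singleton_self u) (w i).2
    let b := OrthonormalBasis.mk hon
      (hon.linearIndependent.span_eq_top_of_card_eq_finrank' (by simp [hn])).ge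
    refine ⟨b, fun k j (hkj : k < j) => ?_⟩
    obtain ⟨j, rfl⟩ := Fin.exists_succ_eq.mpr (Fin.ne_zero_of_lt hkj)
    have hfw : f (w j) = (f.restrict hK (w j) : E) := rfl
    rw [toMatrixOrthonormal_apply_apply, OrthonormalBasis.coe_mk, Matrix.cons_val_succ, hfw]
    induction k using Fin.cases with
    | zero =>
      exact Submodule.inner_right_of_mem_orthogonal (Submodule.mem_span_singleton_self u)
        (f.restrict hK (w j)).2
    | succ k =>
      rw [Matrix.cons_val_succ, ← Submodule.coe_inner, ← toMatrixOrthonormal_apply_apply]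
      exact hw (Fin.succ_lt_succ_iff.mp hkj)

theorem Matrix.exists_unitary_isLowerTriangular {p : ℕ} (B : Matrix (Fin p) (Fin p) ℂ) :
    ∃ U : unitary (Matrix (Fin p) (Fin p) ℂ),
      (star (U : Matrix (Fin p) (Fin p) ℂ) * B * U).IsLowerTriangular := by
  obtain ⟨b, hb⟩ := LinearMap.exists_orthonormalBasis_toMatrix_isLowerTriangular
    finrank_euclideanSpace_fin (toEuclideanLin B)
  refine ⟨⟨(EuclideanSpace.basisFun (Fin p) ℂ).toBasis.toMatrix b,
    (EuclideanSpace.basisFun (Fin p) ℂ).toMatrix_orthonormalBasis_mem_unitary b⟩, ?_⟩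
  convert hb using 1
  ext k j
  simp only [LinearMap.toMatrixOrthonormal_apply_apply, mul_apply, star_apply,
    Basis.toMatrix_apply, OrthonormalBasis.coe_toBasis_repr_apply, EuclideanSpace.basisFun_repr,
    PiLp.inner_apply, toLpLin_apply, mulVec, dotProduct, RCLike.inner_apply, sum_mul]
  rw [sum_comm]
  exact sum_congr rfl fun _ _ => sum_congr rfl fun _ _ => by rw [Complex.star_def]; ring

section DiagonalScaling

def Matrix.diagonalPowUnits {R : Type*} [CommRing R] (p : ℕ) (r : Rˣ) :
    (Matrix (Fin p) (Fin p) R)ˣ where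
  val := diagonal fun j => ↑(r ^ (j : ℕ))
  inv := diagonal fun j => ↑(r ^ (j : ℕ))⁻¹
  val_inv := by simp only [diagonal_mul_diagonal, Units.mul_inv, diagonal_one]
  inv_val := by simp only [diagonal_mul_diagonal, Units.inv_mul, diagonal_one]

theorem Matrix.diagonalPowUnits_conj_apply {R : Type*} [CommRing R] {p : ℕ} (r : Rˣ)
    (L : Matrix (Fin p) (Fin p) R) (j k : Fin p) :
    ((diagonalPowUnits p r : Matrix (Fin p) (Fin p) R) * L *
        (↑(diagonalPowUnits p r)⁻¹ : Matrix (Fin p) (Fin p) R)) j k =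
      ↑(r ^ (j : ℕ)) * L j k * ↑(r ^ (k : ℕ))⁻¹ := by
  simp only [diagonalPowUnits, Units.inv_mk, diagonal_mul, mul_diagonal]

variable {𝕜 : Type*} [RCLike 𝕜] {p : ℕ} {r : 𝕜ˣ}

theorem Matrix.l2_opNorm_diagonalPowUnits_le (hr : ‖(r : 𝕜)‖ ≤ 1) :
    ‖(diagonalPowUnits p r : Matrix (Fin p) (Fin p) 𝕜)‖ ≤ 1 := by
  rw [diagonalPowUnits, Units.val_mk, l2_opNorm_diagonal]
  refine (pi_norm_le_iff_of_nonneg zero_le_one).mpr fun j => ?_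
  simpa using pow_le_one₀ (norm_nonneg _) hr

theorem Matrix.l2_opNorm_diagonalPowUnits_inv_le (hr : ‖(r : 𝕜)‖ ≤ 1) :
    ‖(↑(diagonalPowUnits p r)⁻¹ : Matrix (Fin p) (Fin p) 𝕜)‖ ≤ ‖(r : 𝕜)‖⁻¹ ^ (p - 1) := by
  rw [diagonalPowUnits, Units.inv_mk, l2_opNorm_diagonal]
  refine (pi_norm_le_iff_of_nonneg (by positivity)).mpr fun j => ?_
  simp only [Units.val_inv_eq_inv_val, Units.val_pow_eq_pow_val, norm_inv, norm_pow, ← inv_pow]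
  exact pow_le_pow_right₀ (one_le_inv₀ (norm_pos_iff.mpr r.ne_zero) |>.mpr hr) (by omega)

theorem Matrix.IsLowerTriangular.l2_opNorm_conj_diagonalPowUnits_le
    {L : Matrix (Fin p) (Fin p) 𝕜} (hL : L.IsLowerTriangular) {ρ a : ℝ} (hρ0 : 0 ≤ ρ)
    (ha0 : 0 ≤ a) (hρ : ∀ j, ‖L j j‖ ≤ ρ) (ha : ∀ j k, ‖L j k‖ ≤ a) (hr : ‖(r : 𝕜)‖ < 1) :
    ‖(diagonalPowUnits p r : Matrix (Fin p) (Fin p) 𝕜) * L *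
        (↑(diagonalPowUnits p r)⁻¹ : Matrix (Fin p) (Fin p) 𝕜)‖ ≤
      ρ + a * (‖(r : 𝕜)‖ / (1 - ‖(r : 𝕜)‖)) := by
  set s := ‖(r : 𝕜)‖
  have hs0 : 0 < s := norm_pos_iff.mpr r.ne_zero
  have hentry : ∀ j k, ‖((diagonalPowUnits p r : Matrix (Fin p) (Fin p) 𝕜) * L *
      (↑(diagonalPowUnits p r)⁻¹ : Matrix (Fin p) (Fin p) 𝕜)) j k‖ ≤
      (if j = k then ρ else 0) + a * (if k < j then s ^ (j - k : ℕ) else 0) := by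
    intro j k
    rw [diagonalPowUnits_conj_apply]
    rcases lt_trichotomy k j with hkj | rfl | hjk
    · have hsub : s ^ (j - k : ℕ) = s ^ (j : ℕ) * (s ^ (k : ℕ))⁻¹ :=
        pow_sub₀ s hs0.ne' (by omega)
      simp only [hkj.ne', hkj, if_true, if_false, zero_add, norm_mul, Units.val_inv_eq_inv_val,
        norm_inv, Units.val_pow_eq_pow_val, norm_pow, hsub]
      rw [mul_right_comm, mul_comm]
      gcongr
      exact ha j k
    · simp only [if_true, lt_irrefl, if_false, mul_zero, add_zero]
      rw [mul_comm, Units.inv_mul_cancel_left]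
      exact hρ k
    · simp only [hL (show OrderDual.toDual k < OrderDual.toDual j from hjk), mul_zero, zero_mul,
        norm_zero]
      positivity
  have hc : 0 ≤ ρ + a * (s / (1 - s)) :=
    add_nonneg hρ0 (mul_nonneg ha0 (div_nonneg hs0.le (sub_nonneg.mpr hr.le)))
  refine l2_opNorm_le_of_sum_norm_le hc (fun j => ?_) (fun k => ?_)
  · calc _ ≤ ∑ k, ((if j = k then ρ else 0) + a * (if k < j then s ^ (j - k : ℕ) else 0)) :=
          sum_le_sum fun k _ => hentry j k
      _ ≤ ρ + a * (s / (1 - s)) := by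
          rw [sum_add_distrib, sum_ite_eq, if_pos (mem_univ _), ← mul_sum]
          gcongr
          exact Fin.sum_lt_pow_sub_le hs0.le hr j
  · calc _ ≤ ∑ j, ((if j = k then ρ else 0) + a * (if k < j then s ^ (j - k : ℕ) else 0)) :=
          sum_le_sum fun j _ => hentry j k
      _ ≤ ρ + a * (s / (1 - s)) := by
          rw [sum_add_distrib, sum_ite_eq', if_pos (mem_univ _), ← mul_sum]
          gcongr
          exact Fin.sum_gt_pow_sub_le hs0.le hr k

theorem Matrix.IsLowerTriangular.l2_opNorm_pow_le [NeZero p] {L : Matrix (Fin p) (Fin p) 𝕜}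
    (hL : L.IsLowerTriangular) {ρ a : ℝ} (hρ0 : 0 ≤ ρ) (ha0 : 0 ≤ a) (hρ : ∀ j, ‖L j j‖ ≤ ρ)
    (ha : ∀ j k, ‖L j k‖ ≤ a) (hr : ‖(r : 𝕜)‖ < 1) (i : ℕ) :
    ‖L ^ i‖ ≤ ‖(r : 𝕜)‖⁻¹ ^ (p - 1) * (ρ + a * (‖(r : 𝕜)‖ / (1 - ‖(r : 𝕜)‖))) ^ i := by
  set D := diagonalPowUnits p r
  have hLC : L = (↑D⁻¹ : Matrix (Fin p) (Fin p) 𝕜) *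
      ((D : Matrix (Fin p) (Fin p) 𝕜) * L * (↑D⁻¹ : Matrix (Fin p) (Fin p) 𝕜)) * D := by
    simp only [mul_assoc, Units.inv_mul_cancel_left, Units.inv_mul, mul_one]
  calc ‖L ^ i‖ ≤ ‖(↑D⁻¹ : Matrix (Fin p) (Fin p) 𝕜)‖ *
        ‖(D : Matrix (Fin p) (Fin p) 𝕜) * L * (↑D⁻¹ : Matrix (Fin p) (Fin p) 𝕜)‖ ^ i *
        ‖(D : Matrix (Fin p) (Fin p) 𝕜)‖ := by
        conv_lhs => rw [hLC]
        exact norm_pow_units_conj_le D _ i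
    _ ≤ ‖(r : 𝕜)‖⁻¹ ^ (p - 1) * (ρ + a * (‖(r : 𝕜)‖ / (1 - ‖(r : 𝕜)‖))) ^ i * 1 := by
        gcongr
        · exact l2_opNorm_diagonalPowUnits_inv_le hr.le
        · exact hL.l2_opNorm_conj_diagonalPowUnits_le hρ0 ha0 hρ ha hr
        · exact l2_opNorm_diagonalPowUnits_le hr.le
    _ = _ := mul_one _

end DiagonalScaling

theorem CStarRing.norm_star_mul_mul_coe_unitary_pow {E : Type*} [NormedRing E] [StarRing E]
    [CStarRing E] (U : unitary E) (a : E) (i : ℕ) : ‖(star (U : E) * a * U) ^ i‖ = ‖a ^ i‖ := by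
  have h := Units.conj_pow' (Unitary.toUnits U) a i
  rw [Unitary.val_inv_toUnits_apply, ← Unitary.star_eq_inv, Unitary.coe_star,
    Unitary.val_toUnits_apply] at h
  rw [h, norm_mul_coe_unitary, norm_mem_unitary_mul _ (Unitary.star_mem U.2)]

theorem Matrix.l2_opNorm_pow_le_spectralRadius_add {p : ℕ} [NeZero p]
    (B : Matrix (Fin p) (Fin p) ℂ) {r : ℝ} (hr0 : 0 < r) (hr1 : r < 1) (i : ℕ) :
    ‖B ^ i‖ ≤ r⁻¹ ^ (p - 1) * ((spectralRadius ℂ B).toReal + ‖B‖ * (r / (1 - r))) ^ i := by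
  obtain ⟨U, hL⟩ := exists_unitary_isLowerTriangular B
  have hLa : ∀ j k, ‖(star (U : Matrix (Fin p) (Fin p) ℂ) * B * U) j k‖ ≤ ‖B‖ := fun j k =>
    (norm_entry_le_l2_opNorm _ j k).trans_eq
      (by simpa using CStarRing.norm_star_mul_mul_coe_unitary_pow U B 1)
  have hLρ : ∀ j, ‖(star (U : Matrix (Fin p) (Fin p) ℂ) * B * U) j j‖ ≤
      (spectralRadius ℂ B).toReal := fun j => by
    have hj := hL.diag_mem_spectrum j
    rw [Unitary.spectrum_star_left_conjugate] at hj
    exact spectrum.norm_le_toReal_spectralRadius hj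
  let ru : ℂˣ := Units.mk0 r (Complex.ofReal_ne_zero.mpr hr0.ne')
  have hru : ‖(ru : ℂ)‖ = r := by
    rw [Units.val_mk0, Complex.norm_real, Real.norm_of_nonneg hr0.le]
  rw [← CStarRing.norm_star_mul_mul_coe_unitary_pow U B i, ← hru]
  exact hL.l2_opNorm_pow_le ENNReal.toReal_nonneg (norm_nonneg _) hLρ hLa (hru ▸ hr1) i

/-- Lemma A.1 of the paper.
For a real `p × p` matrix `A` with spectral radius `ρ(A)` (computed over the complex
eigenvalues) and spectral norm `‖·‖` (the operator norm induced by the Euclidean norm),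
for any `ε > 0` one has `‖A^i‖ ≤ M λ^i` for all `i ≥ 0`, where
`M = (1 + 2/ε)^(p-1) √p` and `λ = ρ(A) + ε ‖A‖`. -/
theorem stmt6 (p : ℕ) (A : Matrix (Fin p) (Fin p) ℝ) (ε : ℝ) (hε : 0 < ε) :
    ∀ i : ℕ,
      ‖Matrix.toEuclideanCLM (𝕜 := ℝ) (A ^ i)‖ ≤
        ((1 + 2 / ε) ^ (p - 1) * Real.sqrt p) *
          ((spectralRadius ℂ (A.map (algebraMap ℝ ℂ))).toReal +
              ε * ‖Matrix.toEuclideanCLM (𝕜 := ℝ) A‖) ^ i := by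
  intro i
  simp only [l2_opNorm_toEuclideanCLM]
  rcases p.eq_zero_or_pos with rfl | hp
  · simp [Subsingleton.elim (A ^ i) 0]
  have : NeZero p := ⟨hp.ne'⟩
  have hr1 : ε / (1 + ε) < 1 := (div_lt_one (by positivity)).mpr (by linarith)
  have key := (A.map (algebraMap ℝ ℂ)).l2_opNorm_pow_le_spectralRadius_add (by positivity) hr1 i
  rw [← Matrix.map_pow, l2_opNorm_map_ofReal, l2_opNorm_map_ofReal,
    show ε / (1 + ε) / (1 - ε / (1 + ε)) = ε by field_simp; ring, mul_comm ‖A‖] at key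
  refine key.trans (mul_le_mul_of_nonneg_right ?_ (by positivity))
  have hM : (ε / (1 + ε))⁻¹ ≤ 1 + 2 / ε := by
    rw [inv_div, add_div, div_self hε.ne', add_comm]
    gcongr
    norm_num
  have hp1 : 1 ≤ Real.sqrt p := Real.one_le_sqrt.mpr (by exact_mod_cast hp)
  exact (pow_le_pow_left₀ (by positivity) hM _).trans (le_mul_of_one_le_right (by positivity) hp1)
end

section
/- Let f_1, …, f_n be vectors in ℝ^p and define M_k = I + ∑_{j=1}^{k} f_j f_jᵀ for 1 ≤ k ≤ n (M_0 = I). Then ∑_{k=1}^{n} f_kᵀ M_k^{-1} f_k ≤ log det(M_n); in particular the left-hand side is O(log⁺ det(M_n) + 1). -/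
/-!
Adding `u uᵀ` to a positive definite `B` multiplies the determinant by `1 + uᵀ B⁻¹ u`, so with
`A = B + u uᵀ` one has `uᵀ A⁻¹ u = 1 - det B / det A ≤ log det A - log det B` (from `log x ≤ x - 1`).
Applied to `B = M_{k-1}`, `u = f_k`, the sum telescopes to `log det M_n - log det M_0 = log det M_n`.
-/

open Matrix Finset

theorem Finset.sum_Icc_sub_pred {G : Type*} [AddCommGroup G] (g : ℕ → G) :
    ∀ n, ∑ k ∈ Icc 1 n, (g k - g (k - 1)) = g n - g 0
  | 0 => by simp
  | n + 1 => by
    rw [sum_Icc_succ_top (by omega), sum_Icc_sub_pred g n, Nat.add_sub_cancel]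
    abel

section

variable {m : Type*} [Fintype m] [DecidableEq m]

theorem Matrix.det_add_vecMulVec {R : Type*} [CommRing R] {A : Matrix m m R} (hA : IsUnit A.det)
    (u v : m → R) : (A + vecMulVec u v).det = A.det * (1 + v ⬝ᵥ A⁻¹ *ᵥ u) := by
  rw [vecMulVec_eq Unit, det_add_replicateCol_mul_replicateRow hA, Matrix.mul_assoc,
    ← replicateCol_mulVec, det_unique (1 + _), Matrix.add_apply, one_apply_eq,
    replicateRow_mul_replicateCol_apply]

theorem Matrix.PosDef.dotProduct_inv_mulVec_le_log_det_sub {B : Matrix m m ℝ} (hB : B.PosDef)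
    (u : m → ℝ) :
    u ⬝ᵥ (B + vecMulVec u u)⁻¹ *ᵥ u ≤ Real.log (B + vecMulVec u u).det - Real.log B.det := by
  set A := B + vecMulVec u u
  have hA : A.PosDef := hB.add_posSemidef (by simpa using posSemidef_vecMulVec_self_star u)
  have hratio : 1 - u ⬝ᵥ A⁻¹ *ᵥ u = B.det / A.det := by
    have hdet : B.det = A.det * (1 + u ⬝ᵥ A⁻¹ *ᵥ -u) := by
      rw [← det_add_vecMulVec hA.det_pos.ne'.isUnit, neg_vecMulVec, add_neg_cancel_right]
    rw [hdet, mul_div_cancel_left₀ _ hA.det_pos.ne', mulVec_neg, dotProduct_neg,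
      ← sub_eq_add_neg]
  have hlog := Real.log_le_sub_one_of_pos (div_pos hB.det_pos hA.det_pos)
  rw [Real.log_div hB.det_pos.ne' hA.det_pos.ne'] at hlog
  linarith

end

/-- Lemma A.2 of the paper, deterministic form.
For vectors `f_1, …, f_n` in `ℝ^p` and `M_k = I + ∑_{j=1}^k f_j f_jᵀ`, one has
`∑_{k=1}^n f_kᵀ M_k⁻¹ f_k ≤ log det M_n`. -/
theorem stmt7 (p n : ℕ) (f : ℕ → Fin p → ℝ)
    (M : ℕ → Matrix (Fin p) (Fin p) ℝ)
    (hM : ∀ k, M k = 1 + ∑ j ∈ Finset.Icc 1 k, Matrix.vecMulVec (f j) (f j)) :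
    ∑ k ∈ Finset.Icc 1 n, f k ⬝ᵥ (M k)⁻¹.mulVec (f k) ≤ Real.log (M n).det := by
  have hPD (k : ℕ) : (M k).PosDef := hM k ▸ PosDef.one.add_posSemidef
    (posSemidef_sum _ fun j _ => by simpa using posSemidef_vecMulVec_self_star (f j))
  have hstep (k : ℕ) (hk : k ∈ Icc 1 n) : M k = M (k - 1) + vecMulVec (f k) (f k) := by
    obtain ⟨j, rfl⟩ : ∃ j, k = j + 1 := ⟨k - 1, by grind⟩
    rw [hM, hM, sum_Icc_succ_top (by omega), Nat.add_sub_cancel, add_assoc]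
  calc ∑ k ∈ Icc 1 n, f k ⬝ᵥ (M k)⁻¹ *ᵥ f k
      ≤ ∑ k ∈ Icc 1 n, (Real.log (M k).det - Real.log (M (k - 1)).det) :=
        sum_le_sum fun k hk => by
          rw [hstep k hk]
          exact (hPD (k - 1)).dotProduct_inv_mulVec_le_log_det_sub (f k)
    _ = Real.log (M n).det := by rw [sum_Icc_sub_pred, hM 0]; simp
end

section
/- Let {G_i}_{i≥1} be real numbers with |G_i| ≤ K e^{−r i} for constants K > 0, r > 0, and let {u_k} be a real sequence with u_k = 0 for k < 0 and |u_k| ≤ K'(k+1)^{1+δ} for some constants K' > 0, δ > 0. Fix a > 1 and set p_k = ⌊(log k)^a⌋. Then the ARX(∞) truncation errors δ_k = ∑_{i=p_k+1}^{∞} G_i u_{k−i+1} satisfy ∑_{k=1}^{∞} δ_k² < ∞; in particular ∑_{k=1}^{n} δ_k² = O(1) as n → ∞. -/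
/-!
Every index in `δ_k` is beyond `p_k`, so `|δ_k| ≤ K K' (k+1)^{2+δ} e^{-r p_k}`. Since
`p_k ≥ (log k)^a - 1` and `(log k)^a` outgrows every multiple of `log k` when `a > 1`, the factor
`e^{-r p_k}` beats every power of `k + 1`; in particular `|δ_k| = O((k+1)^{-2})` is summable, and since
`δ_k → 0` so is `δ_k²`.
-/

open Filter Real

lemma tendsto_mul_rpow_sub_mul_atTop (c : ℝ) {r a : ℝ} (hr : 0 < r) (ha : 1 < a) :
    Tendsto (fun x : ℝ => r * x ^ a - c * x) atTop atTop := by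
  have hfactor : Tendsto (fun x : ℝ => r * x ^ (a - 1) - c) atTop atTop :=
    tendsto_atTop_add_const_right _ _
      ((tendsto_rpow_atTop (by linarith)).const_mul_atTop hr)
  refine (tendsto_id.atTop_mul_atTop₀ hfactor).congr' ?_
  filter_upwards [eventually_gt_atTop 0] with x hx
  have hpow : x ^ a = x ^ (a - 1) * x := by
    rw [← rpow_add_one hx.ne', sub_add_cancel]
  simp only [id, hpow]
  ring

lemma tendsto_mul_floor_log_rpow_sub_mul_log_atTop (c : ℝ) {r a : ℝ} (hr : 0 < r) (ha : 1 < a) :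
    Tendsto (fun k : ℕ => r * ⌊log k ^ a⌋₊ - c * log (k + 1)) atTop atTop := by
  have hlog : Tendsto (fun k : ℕ => log k) atTop atTop :=
    tendsto_log_atTop.comp tendsto_natCast_atTop_atTop
  refine tendsto_atTop_mono' _ ?_ (tendsto_atTop_add_const_right _ (-(r + |c| * log 2))
    ((tendsto_mul_rpow_sub_mul_atTop |c| hr ha).comp hlog))
  filter_upwards [eventually_ge_atTop 1] with k hk
  have hk : (1 : ℝ) ≤ k := by exact_mod_cast hk
  have hlog_succ : log (k + 1) ≤ log 2 + log k := by
    rw [← log_mul two_ne_zero (by positivity)]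
    exact log_le_log (by positivity) (by linarith)
  have habs : c * log (k + 1) ≤ |c| * log (k + 1) :=
    mul_le_mul_of_nonneg_right (le_abs_self c) (log_nonneg (by linarith))
  have hfloor : log k ^ a - 1 ≤ ⌊log k ^ a⌋₊ := (Nat.sub_one_lt_floor _).le
  simp only [Function.comp]
  nlinarith [abs_nonneg c]

lemma tendsto_rpow_mul_exp_neg_mul_floor_log_rpow (m : ℝ) {r a : ℝ} (hr : 0 < r) (ha : 1 < a) :
    Tendsto (fun k : ℕ => ((k : ℝ) + 1) ^ m * exp (-(r * ⌊log k ^ a⌋₊))) atTop (nhds 0) := by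
  refine (tendsto_exp_atBot.comp (tendsto_neg_atTop_atBot.comp
    (tendsto_mul_floor_log_rpow_sub_mul_log_atTop m hr ha))).congr fun k => ?_
  rw [Function.comp_apply, Function.comp_apply,
    rpow_def_of_pos (by positivity : (0 : ℝ) < k + 1), ← exp_add]
  ring_nf

lemma summable_rpow_mul_exp_neg_mul_floor_log_rpow (m : ℝ) {r a : ℝ} (hr : 0 < r) (ha : 1 < a) :
    Summable fun k : ℕ => ((k : ℝ) + 1) ^ m * exp (-(r * ⌊log k ^ a⌋₊)) := by
  have hsummable : Summable fun k : ℕ => ((k : ℝ) + 1) ^ (-2 : ℝ) := by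
    have := (summable_nat_add_iff 1).2 (summable_nat_rpow.2 (by norm_num : (-2 : ℝ) < -1))
    simpa using this
  refine hsummable.of_norm_bounded_eventually_nat ?_
  filter_upwards [(tendsto_rpow_mul_exp_neg_mul_floor_log_rpow (m + 2) hr ha).eventually
    (gt_mem_nhds one_pos)] with k hk
  have hk0 : (0 : ℝ) < k + 1 := by positivity
  rw [norm_of_nonneg (by positivity), show m = -2 + (m + 2) by ring, rpow_add hk0, mul_assoc]
  exact mul_le_of_le_one_right (by positivity) hk.le

lemma summable_sq_of_summable_abs {f : ℕ → ℝ} (hf : Summable fun k => |f k|) :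
    Summable fun k => f k ^ 2 := by
  refine hf.of_norm_bounded_eventually_nat ?_
  filter_upwards [hf.tendsto_atTop_zero.eventually (gt_mem_nhds one_pos)] with k hk
  rw [norm_of_nonneg (sq_nonneg _), ← sq_abs]
  nlinarith [abs_nonneg (f k)]

lemma abs_sum_Icc_mul_sub_le {G u : ℕ → ℝ} {K r K' s : ℝ} (hK : 0 ≤ K) (hr : 0 ≤ r)
    (hG : ∀ i : ℕ, 1 ≤ i → |G i| ≤ K * exp (-(r * i))) (hK' : 0 ≤ K') (hs : 0 ≤ s)
    (hu : ∀ k : ℕ, |u k| ≤ K' * ((k : ℝ) + 1) ^ s) (p k : ℕ) :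
    |∑ i ∈ Finset.Icc (p + 1) (k + 1), G i * u (k + 1 - i)|
      ≤ K * K' * (((k : ℝ) + 1) ^ (s + 1) * exp (-(r * p))) := by
  have hterm : ∀ i ∈ Finset.Icc (p + 1) (k + 1),
      |G i * u (k + 1 - i)| ≤ K * exp (-(r * p)) * (K' * ((k : ℝ) + 1) ^ s) := by
    intro i hi
    obtain ⟨hpi, hik⟩ := Finset.mem_Icc.1 hi
    have hGi : |G i| ≤ K * exp (-(r * p)) := by
      refine (hG i (by omega)).trans (mul_le_mul_of_nonneg_left (exp_le_exp.2 ?_) hK)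
      have : (p : ℝ) ≤ i := by exact_mod_cast (by omega : p ≤ i)
      nlinarith
    have hui : |u (k + 1 - i)| ≤ K' * ((k : ℝ) + 1) ^ s := by
      refine (hu _).trans (mul_le_mul_of_nonneg_left (rpow_le_rpow (by positivity) ?_ hs) hK')
      have : ((k + 1 - i : ℕ) : ℝ) ≤ k := by exact_mod_cast (by omega : k + 1 - i ≤ k)
      linarith
    rw [abs_mul]
    exact mul_le_mul hGi hui (abs_nonneg _) (by positivity)
  have hcard : ((Finset.Icc (p + 1) (k + 1)).card : ℝ) ≤ k + 1 := by
    rw [Nat.card_Icc]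
    exact_mod_cast (by omega : k + 1 + 1 - (p + 1) ≤ k + 1)
  calc |∑ i ∈ Finset.Icc (p + 1) (k + 1), G i * u (k + 1 - i)|
      ≤ ∑ i ∈ Finset.Icc (p + 1) (k + 1), |G i * u (k + 1 - i)| :=
        Finset.abs_sum_le_sum_abs _ _
    _ ≤ (Finset.Icc (p + 1) (k + 1)).card • (K * exp (-(r * p)) * (K' * ((k : ℝ) + 1) ^ s)) :=
        Finset.sum_le_card_nsmul _ _ _ hterm
    _ ≤ ((k : ℝ) + 1) * (K * exp (-(r * p)) * (K' * ((k : ℝ) + 1) ^ s)) := by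
        rw [nsmul_eq_mul]
        exact mul_le_mul_of_nonneg_right hcard (by positivity)
    _ = K * K' * (((k : ℝ) + 1) ^ (s + 1) * exp (-(r * p))) := by
        rw [rpow_add_one (by positivity)]
        ring

/-- square-summability of the ARX(∞) truncation errors.
If `|G_i| ≤ K e^{−r i}`, `u_k = 0` for `k < 0`, `|u_k| ≤ K'(k+1)^{1+δ}`, and
`p_k = ⌊(log k)^a⌋` with `a > 1`, then the truncation errors
`δ_k = ∑_{i=p_k+1}^∞ G_i u_{k−i+1}` satisfy `∑_{k=1}^∞ δ_k² < ∞`; in particular the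
partial sums `∑_{k=1}^n δ_k²` are `O(1)`. -/
theorem stmt14 (G : ℕ → ℝ) (K r : ℝ) (hK : 0 < K) (hr : 0 < r)
    (hG : ∀ i : ℕ, 1 ≤ i → |G i| ≤ K * Real.exp (-(r * i)))
    (u : ℕ → ℝ) (K' δ : ℝ) (hK' : 0 < K') (hδ : 0 < δ)
    (hu : ∀ k : ℕ, |u k| ≤ K' * ((k : ℝ) + 1) ^ (1 + δ))
    (a : ℝ) (ha : 1 < a) (pn : ℕ → ℕ) (hpn : ∀ k, pn k = ⌊Real.log k ^ a⌋₊)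
    (δk : ℕ → ℝ)
    (hδk : ∀ k : ℕ, δk k = ∑ i ∈ Finset.Icc (pn k + 1) (k + 1), G i * u (k + 1 - i)) :
    (Summable fun k : ℕ => (δk k) ^ 2) ∧
      ∃ C, ∀ n : ℕ, ∑ k ∈ Finset.Icc 1 n, (δk k) ^ 2 ≤ C := by
  have hbound : ∀ k, |δk k|
      ≤ K * K' * (((k : ℝ) + 1) ^ (1 + δ + 1) * exp (-(r * ⌊log k ^ a⌋₊))) := fun k => by
    rw [hδk, ← hpn]
    exact abs_sum_Icc_mul_sub_le hK.le hr.le hG hK'.le (by linarith) hu (pn k) k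
  have hsummable_abs : Summable fun k => |δk k| :=
    ((summable_rpow_mul_exp_neg_mul_floor_log_rpow _ hr ha).mul_left (K * K')).of_nonneg_of_le
      (fun _ => abs_nonneg _) hbound
  have hsummable := summable_sq_of_summable_abs hsummable_abs
  exact ⟨hsummable, _, fun n => hsummable.sum_le_tsum _ fun _ _ => sq_nonneg _⟩
end
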